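/- arXiv:1310.2828 — 4 statements merged into one kernel-verified Lean document; each statement's English description precedes it below -/
import Mathlib

section
/- Let A be a real symmetric positive definite n×n matrix and R an invertible n×n matrix such that the iteration I − RA is a contraction in the A-norm: ‖(I − RA)v‖_A² ≤ (1 − δ)‖v‖_A² for some δ ∈ (0,1] and all v. Define the symmetrization R̃ = Rᵀ(R⁻¹ + R⁻ᵀ − A)R. Then R̃ is symmetric positive definite and (Av, v) ≤ (R̃⁻¹v, v) for all v ∈ ℝⁿ. -/
/-!
With `R̃ = Rᵀ (R⁻¹ + R⁻ᵀ - A) R`, one has `(I - RA)ᵀ A (I - RA) = A - A R̃ A`. Hence the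
contraction hypothesis says `δ A ≤ A R̃ A`, which makes `R̃` positive definite, while positivity
of `A` gives `A R̃ A ≤ A`. Finally, expanding `0 ≤ (R̃⁻¹v - w)ᵀ R̃ (R̃⁻¹v - w)` gives
`2 (v, w) - (R̃ w, w) ≤ (R̃⁻¹ v, v)`, and `w = Av` yields `(Av, v) ≤ (R̃⁻¹ v, v)`.
-/

open Matrix

namespace Matrix

variable {ι : Type*} [Fintype ι]

theorem dotProduct_transpose_mul_mul_mulVec {R : Type*} [CommSemiring R]
    (B M : Matrix ι ι R) (v : ι → R) :
    v ⬝ᵥ (Mᵀ * B * M) *ᵥ v = (M *ᵥ v) ⬝ᵥ B *ᵥ (M *ᵥ v) := by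
  rw [← mulVec_mulVec, ← mulVec_mulVec, dotProduct_mulVec v, vecMul_transpose]

noncomputable def symmetrizedSmoother {K : Type*} [Field K] [DecidableEq ι]
    (A R : Matrix ι ι K) : Matrix ι ι K :=
  Rᵀ * (R⁻¹ + R⁻¹ᵀ - A) * R

section Smoother

variable {K : Type*} [Field K] [DecidableEq ι] {A R : Matrix ι ι K}

theorem transpose_symmetrizedSmoother (hA : Aᵀ = A) :
    (symmetrizedSmoother A R)ᵀ = symmetrizedSmoother A R := by
  rw [symmetrizedSmoother, transpose_mul, transpose_mul, transpose_transpose, transpose_sub,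
    transpose_add, transpose_transpose, hA, add_comm R⁻¹ᵀ, Matrix.mul_assoc]

theorem symmetrizedSmoother_eq (hR : IsUnit R) :
    symmetrizedSmoother A R = Rᵀ + R - Rᵀ * A * R := by
  have hRR : Rᵀ * R⁻¹ᵀ = 1 := by
    rw [← transpose_mul, nonsing_inv_mul R ((isUnit_iff_isUnit_det R).mp hR), transpose_one]
  rw [symmetrizedSmoother, Matrix.mul_sub, Matrix.mul_add, Matrix.sub_mul, Matrix.add_mul,
    Matrix.mul_assoc Rᵀ R⁻¹ R, nonsing_inv_mul R ((isUnit_iff_isUnit_det R).mp hR),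
    Matrix.mul_one, hRR, Matrix.one_mul]

theorem transpose_mul_mul_one_sub_mul (hA : Aᵀ = A) (hR : IsUnit R) :
    (1 - R * A)ᵀ * A * (1 - R * A) = A - A * symmetrizedSmoother A R * A := by
  rw [symmetrizedSmoother_eq hR, transpose_sub, transpose_one, transpose_mul, hA]
  noncomm_ring

end Smoother

section Ordered

variable {K : Type*} [Field K] [LinearOrder K] [IsStrictOrderedRing K] [StarRing K] [TrivialStar K]

theorem PosDef.of_smul_dotProduct_mulVec_le {A B : Matrix ι ι K} (hA : A.PosDef)
    (hB : B.IsHermitian) {δ : K} (hδ : 0 < δ) (hle : ∀ v, δ * (v ⬝ᵥ A *ᵥ v) ≤ v ⬝ᵥ B *ᵥ v) :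
    B.PosDef :=
  PosDef.of_dotProduct_mulVec_pos hB fun v hv => by
    simpa using (mul_pos hδ (by simpa using hA.dotProduct_mulVec_pos hv)).trans_le (hle v)

theorem PosDef.two_mul_dotProduct_sub_le [DecidableEq ι] {S : Matrix ι ι K} (hS : S.PosDef)
    (v w : ι → K) : 2 * (v ⬝ᵥ w) - w ⬝ᵥ S *ᵥ w ≤ v ⬝ᵥ S⁻¹ *ᵥ v := by
  set u := S⁻¹ *ᵥ v
  have hSu : S *ᵥ u = v := by
    rw [mulVec_mulVec, mul_nonsing_inv S (isUnit_iff_isUnit_det S |>.mp hS.isUnit), one_mulVec]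
  have hSt : Sᵀ = S := by simpa [conjTranspose_eq_transpose_of_trivial] using hS.1.eq
  have hsymm : ∀ x y, x ⬝ᵥ S *ᵥ y = (S *ᵥ x) ⬝ᵥ y := fun x y => by
    rw [dotProduct_mulVec, ← mulVec_transpose, hSt]
  have hnonneg : 0 ≤ (u - w) ⬝ᵥ S *ᵥ (u - w) := by
    simpa using hS.posSemidef.dotProduct_mulVec_nonneg (u - w)
  simp only [mulVec_sub, dotProduct_sub, sub_dotProduct, hsymm _ w, hSu] at hnonneg
  rw [hsymm w w, dotProduct_comm v u]
  linarith [dotProduct_comm w v]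

end Ordered

end Matrix

theorem stmt_11_general (n : ℕ) (A R : Matrix (Fin n) (Fin n) ℝ)
    (hA : A.PosDef) (hR : IsUnit R) (δ : ℝ) (hδ0 : 0 < δ)
    (hcontr : ∀ v : Fin n → ℝ,
      ((1 - R * A).mulVec v) ⬝ᵥ A.mulVec ((1 - R * A).mulVec v) ≤
        (1 - δ) * (v ⬝ᵥ A.mulVec v)) :
    let Rt : Matrix (Fin n) (Fin n) ℝ := Rᵀ * (R⁻¹ + R⁻¹ᵀ - A) * R
    Rt.PosDef ∧ ∀ v : Fin n → ℝ, v ⬝ᵥ A.mulVec v ≤ v ⬝ᵥ Rt⁻¹.mulVec v := by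
  show (symmetrizedSmoother A R).PosDef ∧
    ∀ v, v ⬝ᵥ A *ᵥ v ≤ v ⬝ᵥ (symmetrizedSmoother A R)⁻¹ *ᵥ v
  set S := symmetrizedSmoother A R
  have hAt : Aᵀ = A := by simpa [conjTranspose_eq_transpose_of_trivial] using hA.1.eq
  have henergy : ∀ v, (A *ᵥ v) ⬝ᵥ S *ᵥ (A *ᵥ v) =
      v ⬝ᵥ A *ᵥ v - ((1 - R * A) *ᵥ v) ⬝ᵥ A *ᵥ ((1 - R * A) *ᵥ v) := fun v => by
    rw [← dotProduct_transpose_mul_mul_mulVec, ← dotProduct_transpose_mul_mul_mulVec,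
      transpose_mul_mul_one_sub_mul hAt hR, hAt, sub_mulVec, dotProduct_sub, sub_sub_cancel]
  have hS : S.PosDef := by
    have hASA : (star A * S * A).PosDef := by
      refine hA.of_smul_dotProduct_mulVec_le ?_ hδ0 fun v => ?_
      · refine isHermitian_conjTranspose_mul_mul A ?_
        rw [IsHermitian, conjTranspose_eq_transpose_of_trivial]
        exact transpose_symmetrizedSmoother hAt
      · rw [star_eq_conjTranspose, conjTranspose_eq_transpose_of_trivial,
          dotProduct_transpose_mul_mul_mulVec, henergy]
        linarith [hcontr v]
    exact (IsUnit.posDef_star_left_conjugate_iff hA.isUnit).mp hASA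
  refine ⟨hS, fun v => ?_⟩
  have hupper : (A *ᵥ v) ⬝ᵥ S *ᵥ (A *ᵥ v) ≤ v ⬝ᵥ A *ᵥ v := by
    rw [henergy]
    simpa using hA.posSemidef.dotProduct_mulVec_nonneg ((1 - R * A) *ᵥ v)
  linarith [hS.two_mul_dotProduct_sub_le v (A *ᵥ v)]

theorem stmt_11 (n : ℕ) (A R : Matrix (Fin n) (Fin n) ℝ)
    (hA : A.PosDef) (hR : IsUnit R) (δ : ℝ) (hδ0 : 0 < δ) (hδ1 : δ ≤ 1)
    (hcontr : ∀ v : Fin n → ℝ,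
      ((1 - R * A).mulVec v) ⬝ᵥ A.mulVec ((1 - R * A).mulVec v) ≤
        (1 - δ) * (v ⬝ᵥ A.mulVec v)) :
    let Rt : Matrix (Fin n) (Fin n) ℝ := Rᵀ * (R⁻¹ + R⁻¹ᵀ - A) * R
    Rt.PosDef ∧ ∀ v : Fin n → ℝ, v ⬝ᵥ A.mulVec v ≤ v ⬝ᵥ Rt⁻¹.mulVec v :=
  stmt_11_general n A R hA hR δ hδ0 hcontr
end

section
/- Let A be symmetric positive definite, D its diagonal (assumed positive definite). Then for any v, (D⁻¹Av, Av) ≤ ρ(D^{-1/2}AD^{-1/2})·(Av, v), where ρ denotes the spectral radius. -/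
/-!
Put `d i = 1 / √(A i i)`, `M = diag d * A * diag d` and `u = (diag d)⁻¹ v`. Then `M u = diag d (A v)`,
so the left side is `‖M u‖²` and `(A v, v) = (M u, u)`. Expanding `u` in an orthonormal eigenbasis of
`M`, with coefficients `c i` and eigenvalues `0 ≤ λ i ≤ ρ`, this reads `∑ λ i² c i² ≤ ρ ∑ λ i c i²`.
-/

open Matrix

theorem OrthonormalBasis.dotProduct_eq_sum {ι : Type*} [Fintype ι]
    (b : OrthonormalBasis ι ℝ (EuclideanSpace ℝ ι)) (x y : ι → ℝ) :
    x ⬝ᵥ y = ∑ i, (x ⬝ᵥ (b i).ofLp) * (y ⬝ᵥ (b i).ofLp) := by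
  have := b.sum_inner_mul_inner (WithLp.toLp 2 x) (WithLp.toLp 2 y)
  simpa [EuclideanSpace.inner_eq_star_dotProduct, dotProduct_comm] using this.symm

variable {ι : Type*} [Fintype ι] [DecidableEq ι]

theorem Matrix.IsHermitian.mulVec_dotProduct_eigenvectorBasis {M : Matrix ι ι ℝ}
    (hM : M.IsHermitian) (u : ι → ℝ) (i : ι) :
    (M *ᵥ u) ⬝ᵥ (hM.eigenvectorBasis i).ofLp =
      hM.eigenvalues i * (u ⬝ᵥ (hM.eigenvectorBasis i).ofLp) := by
  rw [dotProduct_comm, dotProduct_mulVec, ← mulVec_transpose, ← conjTranspose_eq_transpose_of_trivial,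
    hM.eq, hM.mulVec_eigenvectorBasis, smul_dotProduct, smul_eq_mul, dotProduct_comm]

theorem Matrix.PosSemidef.mulVec_dotProduct_mulVec_le {M : Matrix ι ι ℝ} (hM : M.IsHermitian)
    (hpsd : M.PosSemidef) (u : ι → ℝ) :
    (M *ᵥ u) ⬝ᵥ (M *ᵥ u) ≤ (⨆ i, hM.eigenvalues i) * (u ⬝ᵥ (M *ᵥ u)) := by
  set b := hM.eigenvectorBasis
  rw [b.dotProduct_eq_sum, b.dotProduct_eq_sum u, Finset.mul_sum]
  refine Finset.sum_le_sum fun i _ => ?_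
  simp only [b, hM.mulVec_dotProduct_eigenvectorBasis]
  have hev : 0 ≤ hM.eigenvalues i := hpsd.eigenvalues_nonneg i
  have hmax : hM.eigenvalues i ≤ ⨆ j, hM.eigenvalues j := le_ciSup (Set.finite_range _).bddAbove i
  have hsq := mul_self_nonneg (u ⬝ᵥ (hM.eigenvectorBasis i).ofLp)
  nlinarith [mul_le_mul_of_nonneg_right hmax (mul_nonneg hev hsq)]

theorem Matrix.diagonal_mul_mul_diagonal_mulVec {K : Type*} [Field K] (A : Matrix ι ι K) {d : ι → K}
    (hd : ∀ i, d i ≠ 0) (v : ι → K) :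
    (diagonal d * A * diagonal d) *ᵥ (diagonal d⁻¹ *ᵥ v) = diagonal d *ᵥ (A *ᵥ v) := by
  have hdinv : (fun i => d i * d⁻¹ i) = fun _ => 1 := funext fun i => mul_inv_cancel₀ (hd i)
  rw [← mulVec_mulVec, mulVec_mulVec v (diagonal d), diagonal_mul_diagonal, hdinv,
    diagonal_one, one_mulVec, mulVec_mulVec]

theorem Matrix.diagonal_mulVec_dotProduct_diagonal_mulVec {R : Type*} [CommSemiring R]
    (d w : ι → R) : (diagonal d *ᵥ w) ⬝ᵥ (diagonal d *ᵥ w) = w ⬝ᵥ (diagonal (d * d) *ᵥ w) := by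
  simp only [dotProduct, mulVec_diagonal, Pi.mul_apply]
  exact Finset.sum_congr rfl fun i _ => by ring

theorem Matrix.diagonal_inv_mulVec_dotProduct_diagonal_mulVec {K : Type*} [Field K] {d : ι → K}
    (hd : ∀ i, d i ≠ 0) (v w : ι → K) : (diagonal d⁻¹ *ᵥ v) ⬝ᵥ (diagonal d *ᵥ w) = v ⬝ᵥ w := by
  simp only [dotProduct, mulVec_diagonal, Pi.inv_apply]
  exact Finset.sum_congr rfl fun i _ => by field_simp [hd i]

theorem stmt_14_general (n : ℕ) (A : Matrix (Fin n) (Fin n) ℝ)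
    (hA : A.PosDef) (hdiag : ∀ i, 0 < A i i)
    (hM : ((Matrix.diagonal fun i => 1 / Real.sqrt (A i i)) * A *
      (Matrix.diagonal fun i => 1 / Real.sqrt (A i i))).IsHermitian) :
    ∀ v : Fin n → ℝ,
      (A.mulVec v) ⬝ᵥ ((Matrix.diagonal fun i => (A i i)⁻¹).mulVec (A.mulVec v)) ≤
        (⨆ i, hM.eigenvalues i) * (v ⬝ᵥ A.mulVec v) := by
  intro v
  set d : Fin n → ℝ := fun i => 1 / Real.sqrt (A i i)
  have hd : ∀ i, d i ≠ 0 := fun i => by positivity [hdiag i]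
  have hdd : (fun i => (A i i)⁻¹) = d * d := funext fun i => by
    simp only [d, Pi.mul_apply, one_div, ← mul_inv, Real.mul_self_sqrt (hdiag i).le]
  have hpsd : (diagonal d * A * diagonal d).PosSemidef := by
    simpa [d] using hA.posSemidef.mul_mul_conjTranspose_same (diagonal d)
  have hMu := A.diagonal_mul_mul_diagonal_mulVec hd v
  rw [hdd]
  calc (A *ᵥ v) ⬝ᵥ (diagonal (d * d) *ᵥ (A *ᵥ v))
      = ((diagonal d * A * diagonal d) *ᵥ (diagonal d⁻¹ *ᵥ v)) ⬝ᵥ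
          ((diagonal d * A * diagonal d) *ᵥ (diagonal d⁻¹ *ᵥ v)) := by
        rw [hMu, diagonal_mulVec_dotProduct_diagonal_mulVec]
    _ ≤ (⨆ i, hM.eigenvalues i) * ((diagonal d⁻¹ *ᵥ v) ⬝ᵥ
          ((diagonal d * A * diagonal d) *ᵥ (diagonal d⁻¹ *ᵥ v))) :=
        hpsd.mulVec_dotProduct_mulVec_le hM _
    _ = (⨆ i, hM.eigenvalues i) * (v ⬝ᵥ A *ᵥ v) := by
        rw [hMu, diagonal_inv_mulVec_dotProduct_diagonal_mulVec hd]

theorem stmt_14 (n : ℕ) (hn : 0 < n) (A : Matrix (Fin n) (Fin n) ℝ)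
    (hA : A.PosDef) (hdiag : ∀ i, 0 < A i i)
    (hM : ((Matrix.diagonal fun i => 1 / Real.sqrt (A i i)) * A *
      (Matrix.diagonal fun i => 1 / Real.sqrt (A i i))).IsHermitian) :
    ∀ v : Fin n → ℝ,
      (A.mulVec v) ⬝ᵥ ((Matrix.diagonal fun i => (A i i)⁻¹).mulVec (A.mulVec v)) ≤
        (⨆ i, hM.eigenvalues i) * (v ⬝ᵥ A.mulVec v) :=
  stmt_14_general n A hA hdiag hM
end

section
/- Let A be SPD, V_H a subspace, B_H an SPD operator on V_H, R̃ an SPD operator, R an operator, and define (Bv, v) = min_{v_H ∈ V_H} ( (B_H v_H, v_H) + (R̃⁻¹(v − (I − RᵀA)v_H), v − (I − RᵀA)v_H) ). Suppose there are constants such that for all v: ‖v‖²_A ≤ 2‖v − (I − RᵀA)v_H‖²_{R̃⁻¹} + 2‖v_H‖²_A holds whenever (Aw,w) ≤ (R̃⁻¹w,w) for all w and (A v_H, v_H) ≤ C (B_H v_H, v_H) on V_H. Then (Av, v) ≤ max(2, 2C)·(Bv, v) for all v. -/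
open Matrix

lemma le_max_two_two_mul_mul_add {a r b c C : ℝ} (hr : 0 ≤ r) (hb : 0 ≤ b)
    (ha : a ≤ 2 * r + 2 * c) (hc : c ≤ C * b) :
    a ≤ max 2 (2 * C) * (b + r) := by
  have h2 : 2 * r ≤ max 2 (2 * C) * r := mul_le_mul_of_nonneg_right (le_max_left _ _) hr
  have h2C : 2 * C * b ≤ max 2 (2 * C) * b := mul_le_mul_of_nonneg_right (le_max_right _ _) hb
  linarith

lemma dotProduct_mulVec_inv_nonneg {ι : Type*} [Fintype ι] [DecidableEq ι]
    {M : Matrix ι ι ℝ} (hM : M.PosDef) (x : ι → ℝ) : 0 ≤ x ⬝ᵥ M⁻¹.mulVec x := by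
  simpa using hM.inv.posSemidef.dotProduct_mulVec_nonneg x

lemma dotProduct_mulVec_nonneg_of_pos_on_submodule {ι : Type*} [Fintype ι]
    {M : Matrix ι ι ℝ} {V : Submodule ℝ (ι → ℝ)} (hM : ∀ x ∈ V, x ≠ 0 → 0 < x ⬝ᵥ M.mulVec x)
    {x : ι → ℝ} (hx : x ∈ V) : 0 ≤ x ⬝ᵥ M.mulVec x := by
  rcases eq_or_ne x 0 with rfl | hx0
  · simp
  · exact (hM x hx hx0).le

theorem stmt_16_general (n : ℕ) (A BH Rt R : Matrix (Fin n) (Fin n) ℝ)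
    (hRt : Rt.PosDef)
    (VH : Submodule ℝ (Fin n → ℝ))
    (hBHpd : ∀ vH ∈ VH, vH ≠ 0 → 0 < vH ⬝ᵥ BH.mulVec vH)
    (C : ℝ)
    (hcoarse : ∀ vH ∈ VH, vH ⬝ᵥ A.mulVec vH ≤ C * (vH ⬝ᵥ BH.mulVec vH))
    (htri : ∀ v : Fin n → ℝ, ∀ vH ∈ VH,
      v ⬝ᵥ A.mulVec v ≤
        2 * ((v - (1 - Rᵀ * A).mulVec vH) ⬝ᵥ
              Rt⁻¹.mulVec (v - (1 - Rᵀ * A).mulVec vH)) +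
        2 * (vH ⬝ᵥ A.mulVec vH)) :
    ∀ v : Fin n → ℝ,
      v ⬝ᵥ A.mulVec v ≤
        max 2 (2 * C) *
          ⨅ vH : VH, ((vH : Fin n → ℝ) ⬝ᵥ BH.mulVec vH +
            (v - (1 - Rᵀ * A).mulVec vH) ⬝ᵥ
              Rt⁻¹.mulVec (v - (1 - Rᵀ * A).mulVec vH)) := by
  intro v
  have hM : 0 ≤ max 2 (2 * C) := le_trans zero_le_two (le_max_left _ _)
  rw [Real.mul_iInf_of_nonneg hM]
  exact le_ciInf fun ⟨vH, hvH⟩ =>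
    le_max_two_two_mul_mul_add (dotProduct_mulVec_inv_nonneg hRt _)
      (dotProduct_mulVec_nonneg_of_pos_on_submodule hBHpd hvH) (htri v vH hvH) (hcoarse vH hvH)

theorem stmt_16 (n : ℕ) (A BH Rt R : Matrix (Fin n) (Fin n) ℝ)
    (hA : A.PosDef) (hRt : Rt.PosDef)
    (VH : Submodule ℝ (Fin n → ℝ))
    (hBHsym : BHᵀ = BH)
    (hBHpd : ∀ vH ∈ VH, vH ≠ 0 → 0 < vH ⬝ᵥ BH.mulVec vH)
    (C : ℝ)
    (hsm : ∀ w : Fin n → ℝ, w ⬝ᵥ A.mulVec w ≤ w ⬝ᵥ Rt⁻¹.mulVec w)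
    (hcoarse : ∀ vH ∈ VH, vH ⬝ᵥ A.mulVec vH ≤ C * (vH ⬝ᵥ BH.mulVec vH))
    (htri : ∀ v : Fin n → ℝ, ∀ vH ∈ VH,
      v ⬝ᵥ A.mulVec v ≤
        2 * ((v - (1 - Rᵀ * A).mulVec vH) ⬝ᵥ
              Rt⁻¹.mulVec (v - (1 - Rᵀ * A).mulVec vH)) +
        2 * (vH ⬝ᵥ A.mulVec vH)) :
    ∀ v : Fin n → ℝ,
      v ⬝ᵥ A.mulVec v ≤
        max 2 (2 * C) *
          ⨅ vH : VH, ((vH : Fin n → ℝ) ⬝ᵥ BH.mulVec vH +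
            (v - (1 - Rᵀ * A).mulVec vH) ⬝ᵥ
              Rt⁻¹.mulVec (v - (1 - Rᵀ * A).mulVec vH)) :=
  stmt_16_general n A BH Rt R hRt VH hBHpd C hcoarse htri
end

section
/- Let A be SPD, R̃ SPD with (Av, v) ≤ (R̃⁻¹v, v) for all v, and Rᵀ any operator satisfying ‖RᵀAu‖²_{R̃⁻¹} ≤ C₁‖u‖²_A for all u. Let I_H : V_H → V be an operator with ‖I_H v_H‖²_A ≤ C₂‖v_H‖²_a for a norm ‖·‖_a on the fine space, and suppose ‖v − I_H v‖²_{R̃⁻¹} ≤ C₃ ‖v‖²_A. Then for all v: ‖I_H v‖²_A + ‖v − I_H v + RᵀA I_H v‖²_{R̃⁻¹} ≤ (C₂ + 2C₃ + 2C₁C₂)·‖v‖²_A (using (x+y)² ≤ 2x² + 2y², interpreting ‖v‖_a = ‖v‖_A). -/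
open Matrix

namespace Matrix

variable {ι : Type*} [Fintype ι]

lemma IsHermitian.dotProduct_mulVec_comm {M : Matrix ι ι ℝ} (hM : M.IsHermitian)
    (x y : ι → ℝ) : x ⬝ᵥ M *ᵥ y = y ⬝ᵥ M *ᵥ x := by
  rw [← dotProduct_transpose_mulVec, ← conjTranspose_eq_transpose_of_trivial, hM.eq]

lemma PosSemidef.dotProduct_mulVec_add_le {M : Matrix ι ι ℝ} (hM : M.PosSemidef)
    (x y : ι → ℝ) :
    (x + y) ⬝ᵥ M *ᵥ (x + y) ≤ 2 * (x ⬝ᵥ M *ᵥ x) + 2 * (y ⬝ᵥ M *ᵥ y) := by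
  have hdiff : 0 ≤ (x - y) ⬝ᵥ M *ᵥ (x - y) := hM.dotProduct_mulVec_nonneg (x - y)
  have hsymm := hM.1.dotProduct_mulVec_comm x y
  simp only [mulVec_add, mulVec_sub, dotProduct_add, dotProduct_sub, add_dotProduct,
    sub_dotProduct] at hdiff ⊢
  linarith

end Matrix

/-- `c` may be negative here; then `q` vanishes identically. -/
lemma mul_le_mul_of_forall_mul_nonneg {α : Type*} {q : α → ℝ} (hq : ∀ x, 0 ≤ q x) {c : ℝ}
    (hc : ∀ x, 0 ≤ c * q x) {C : ℝ} {x y : α} (h : q x ≤ C * q y) :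
    c * q x ≤ c * (C * q y) := by
  rcases le_or_gt 0 c with hc0 | hc0
  · exact mul_le_mul_of_nonneg_left h hc0
  · have hzero : ∀ z, q z = 0 := fun z =>
      le_antisymm (nonpos_of_mul_nonneg_right (hc z) hc0) (hq z)
    simp [hzero]

theorem stmt_19_general (n : ℕ) (A Rt R IH : Matrix (Fin n) (Fin n) ℝ)
    (hA : A.PosDef) (hRt : Rt.PosDef)
    (C₁ C₂ C₃ : ℝ)
    (hR : ∀ u : Fin n → ℝ,
      ((Rᵀ * A).mulVec u) ⬝ᵥ Rt⁻¹.mulVec ((Rᵀ * A).mulVec u) ≤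
        C₁ * (u ⬝ᵥ A.mulVec u))
    (hIH : ∀ v : Fin n → ℝ,
      (IH.mulVec v) ⬝ᵥ A.mulVec (IH.mulVec v) ≤ C₂ * (v ⬝ᵥ A.mulVec v))
    (happrox : ∀ v : Fin n → ℝ,
      (v - IH.mulVec v) ⬝ᵥ Rt⁻¹.mulVec (v - IH.mulVec v) ≤
        C₃ * (v ⬝ᵥ A.mulVec v)) :
    ∀ v : Fin n → ℝ,
      (IH.mulVec v) ⬝ᵥ A.mulVec (IH.mulVec v) +
        (v - IH.mulVec v + (Rᵀ * A).mulVec (IH.mulVec v)) ⬝ᵥ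
          Rt⁻¹.mulVec (v - IH.mulVec v + (Rᵀ * A).mulVec (IH.mulVec v)) ≤
      (C₂ + 2 * C₃ + 2 * C₁ * C₂) * (v ⬝ᵥ A.mulVec v) := by
  intro v
  have hRtinv : Rt⁻¹.PosSemidef := hRt.inv.posSemidef
  have hC₁ : ∀ u, 0 ≤ C₁ * (u ⬝ᵥ A *ᵥ u) := fun u =>
    (hRtinv.dotProduct_mulVec_nonneg ((Rᵀ * A) *ᵥ u)).trans (hR u)
  have hcoarse := mul_le_mul_of_forall_mul_nonneg hA.posSemidef.dotProduct_mulVec_nonneg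
    hC₁ (hIH v)
  calc _ ≤ C₂ * (v ⬝ᵥ A *ᵥ v) + (2 * ((v - IH *ᵥ v) ⬝ᵥ Rt⁻¹ *ᵥ (v - IH *ᵥ v)) +
          2 * ((Rᵀ * A) *ᵥ (IH *ᵥ v) ⬝ᵥ Rt⁻¹ *ᵥ ((Rᵀ * A) *ᵥ (IH *ᵥ v)))) :=
        add_le_add (hIH v) (hRtinv.dotProduct_mulVec_add_le _ _)
    _ ≤ C₂ * (v ⬝ᵥ A *ᵥ v) + (2 * (C₃ * (v ⬝ᵥ A *ᵥ v)) +
          2 * (C₁ * (C₂ * (v ⬝ᵥ A *ᵥ v)))) := by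
        gcongr
        exacts [happrox v, (hR _).trans hcoarse]
    _ = _ := by ring

theorem stmt_19 (n : ℕ) (A Rt R IH : Matrix (Fin n) (Fin n) ℝ)
    (hA : A.PosDef) (hRt : Rt.PosDef)
    (C₁ C₂ C₃ : ℝ)
    (hsm : ∀ v : Fin n → ℝ, v ⬝ᵥ A.mulVec v ≤ v ⬝ᵥ Rt⁻¹.mulVec v)
    (hR : ∀ u : Fin n → ℝ,
      ((Rᵀ * A).mulVec u) ⬝ᵥ Rt⁻¹.mulVec ((Rᵀ * A).mulVec u) ≤
        C₁ * (u ⬝ᵥ A.mulVec u))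
    (hIH : ∀ v : Fin n → ℝ,
      (IH.mulVec v) ⬝ᵥ A.mulVec (IH.mulVec v) ≤ C₂ * (v ⬝ᵥ A.mulVec v))
    (happrox : ∀ v : Fin n → ℝ,
      (v - IH.mulVec v) ⬝ᵥ Rt⁻¹.mulVec (v - IH.mulVec v) ≤
        C₃ * (v ⬝ᵥ A.mulVec v)) :
    ∀ v : Fin n → ℝ,
      (IH.mulVec v) ⬝ᵥ A.mulVec (IH.mulVec v) +
        (v - IH.mulVec v + (Rᵀ * A).mulVec (IH.mulVec v)) ⬝ᵥ
          Rt⁻¹.mulVec (v - IH.mulVec v + (Rᵀ * A).mulVec (IH.mulVec v)) ≤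
      (C₂ + 2 * C₃ + 2 * C₁ * C₂) * (v ⬝ᵥ A.mulVec v) :=
  stmt_19_general n A Rt R IH hA hRt C₁ C₂ C₃ hR hIH happrox
end
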